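/- arXiv:2112.12994 — 2 statements merged into one kernel-verified Lean document; each statement's English description precedes it below -/
import Mathlib

section
/- Let A be a real n×d matrix and let T be a subset of the row indices {1, …, n} such that the row submatrix A_T (the rows of A indexed by T) has full column rank d. Then for every i = 1, …, n, the generalised leverage score of A with respect to A_T dominates the true leverage score: ℓ^{A_T}(i) = A(i,:)ᵀ(A_TᵀA_T)⁻¹A(i,:) ≥ A(i,:)ᵀ(AᵀA)⁻¹A(i,:) = ℓ(i). (This is the deterministic lower-bound part of the Leverage Score Approximation via Uniform Sampling theorem: generalised leverage scores with respect to any row-subsampled matrix overestimate the true leverage scores.) -/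
/-! Deleting rows can only decrease the Gram matrix in the Loewner order, since
`AᵀA = A_TᵀA_T + A_{Tᶜ}ᵀA_{Tᶜ}`. Inversion reverses the Loewner order on positive definite
matrices, so `(AᵀA)⁻¹ ⪯ (A_TᵀA_T)⁻¹`, and evaluating both quadratic forms at `A(i,:)` gives
the claim. -/

open Matrix

namespace Matrix

variable {m n R : Type*}

theorem mulVec_injective_of_rank_eq_card [Fintype n] [Field R] (A : Matrix m n R)
    (hA : A.rank = Fintype.card n) : Function.Injective A.mulVec := by
  have hker := A.mulVecLin.finrank_range_add_finrank_ker
  rw [Module.finrank_fintype_fun_eq_card, ← Matrix.rank, hA, add_eq_left,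
    Submodule.finrank_eq_zero, LinearMap.ker_eq_bot] at hker
  exact hker

section RowSubmatrix

variable [Fintype m] [DecidableEq m]

theorem conjTranspose_mul_self_eq_add_submatrix [NonUnitalNonAssocSemiring R] [Star R]
    (A : Matrix m n R) (s : Finset m) :
    Aᴴ * A = (A.submatrix (fun i : s => i.val) id)ᴴ * A.submatrix (fun i : s => i.val) id
      + (A.submatrix (fun i : {i // i ∉ s} => i.val) id)ᴴ *
        A.submatrix (fun i : {i // i ∉ s} => i.val) id := by
  ext j k
  simp only [add_apply, mul_apply, conjTranspose_apply, submatrix_apply, id_eq]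
  rw [Finset.sum_coe_sort s (fun i => star (A i j) * A i k),
    ← Finset.sum_subtype sᶜ (fun _ => Finset.mem_compl) (fun i => star (A i j) * A i k),
    Finset.sum_add_sum_compl]

theorem posSemidef_conjTranspose_mul_self_sub_submatrix [Fintype n] [Ring R] [PartialOrder R]
    [StarRing R] [StarOrderedRing R] (A : Matrix m n R) (s : Finset m) :
    (Aᴴ * A - (A.submatrix (fun i : s => i.val) id)ᴴ *
      A.submatrix (fun i : s => i.val) id).PosSemidef := by
  rw [conjTranspose_mul_self_eq_add_submatrix A s, add_sub_cancel_left]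
  exact posSemidef_conjTranspose_mul_self _

end RowSubmatrix

/-- Both hypothesis and conclusion say that the block matrix `[[N, 1], [1, M⁻¹]]` is positive
semidefinite, read off from its two Schur complements. -/
theorem PosDef.posSemidef_inv_sub_inv [Fintype n] [DecidableEq n] [Field R] [PartialOrder R]
    [StarRing R] [StarOrderedRing R] {M N : Matrix n n R} (hM : M.PosDef)
    (hMN : (N - M).PosSemidef) : (M⁻¹ - N⁻¹).PosSemidef := by
  have hN : N.PosDef := add_sub_cancel M N ▸ hM.add_posSemidef hMN
  let _ := hM.isUnit.invertible
  let _ := hN.isUnit.invertible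
  have hblock := (PosDef.fromBlocks₂₂ N 1 hM.inv).mpr (by simpa [inv_inv_of_invertible] using hMN)
  simpa using (PosDef.fromBlocks₁₁ 1 M⁻¹ hN).mp (by simpa using hblock)

end Matrix

/-- if the row submatrix A_T has full column rank d, then for every row i,
the generalised leverage score of A w.r.t. A_T dominates the true leverage score:
A(i,:)ᵀ(A_TᵀA_T)⁻¹A(i,:) ≥ A(i,:)ᵀ(AᵀA)⁻¹A(i,:). -/
theorem generalised_leverage_scores_dominate
    {n d : ℕ} (A : Matrix (Fin n) (Fin d) ℝ) (T : Finset (Fin n))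
    (hT : (A.submatrix (fun i : {i : Fin n // i ∈ T} => (i : Fin n)) id).rank = d) :
    ∀ i : Fin n,
      A i ⬝ᵥ (Aᵀ * A)⁻¹.mulVec (A i)
        ≤ A i ⬝ᵥ
            ((A.submatrix (fun i : {i : Fin n // i ∈ T} => (i : Fin n)) id)ᵀ *
              (A.submatrix (fun i : {i : Fin n // i ∈ T} => (i : Fin n)) id))⁻¹.mulVec (A i) := by
  intro i
  set B := A.submatrix (fun i : {i : Fin n // i ∈ T} => (i : Fin n)) id
  have hB : (Bᴴ * B).PosDef :=
    .conjTranspose_mul_self B (B.mulVec_injective_of_rank_eq_card (by simpa using hT))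
  have hle := (hB.posSemidef_inv_sub_inv
    (A.posSemidef_conjTranspose_mul_self_sub_submatrix T)).dotProduct_mulVec_nonneg (A i)
  simpa only [conjTranspose_eq_transpose_of_trivial, star_trivial, sub_mulVec, dotProduct_sub,
    sub_nonneg] using hle
end

section
/- Let A ∈ ℝ^{n×d} have full column rank, let b ∈ ℝⁿ, let x* = (AᵀA)⁻¹Aᵀb be the OLS solution, and let r = Ax* − b be the residual, assumed nonzero. Let M = [A, b] ∈ ℝ^{n×(d+1)} be the matrix obtained by appending b to A as an extra column (which then has full column rank d+1). Then for every row index i, the leverage scores satisfy the update formula ℓ_M(i) = ℓ_A(i) + r(i)² / ‖r‖², where ℓ_A(i) and ℓ_M(i) are the i-th leverage scores of A and M respectively. (This is the exact rank-one recursion underlying the approximate leverage scores of the LSAR algorithm.) -/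
open Matrix BigOperators

private lemma mulVec_inj_of_rank {n d : ℕ} (A : Matrix (Fin n) (Fin d) ℝ)
    (hA : A.rank = d) {w : Fin d → ℝ} (hw : A.mulVec w = 0) : w = 0 := by
  have h1 := LinearMap.finrank_range_add_finrank_ker A.mulVecLin
  have h2 : Module.finrank ℝ (Fin d → ℝ) = d := by simp
  have h3 : Matrix.rank A = Module.finrank ℝ (LinearMap.range A.mulVecLin) := rfl
  rw [h2] at h1
  rw [h3] at hA
  have h4 : Module.finrank ℝ (LinearMap.ker A.mulVecLin) = 0 := by omega
  have h5 : LinearMap.ker A.mulVecLin = ⊥ := Submodule.finrank_eq_zero.mp h4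
  have h6 : w ∈ LinearMap.ker A.mulVecLin := by
    simpa [Matrix.mulVecLin_apply] using hw
  simpa [h5] using h6

/-- leverage-score update under appending the response column. If A has
full column rank, x* = (AᵀA)⁻¹Aᵀb is the OLS solution with nonzero residual
r = Ax* − b, and M = [A, b], then ℓ_M(i) = ℓ_A(i) + r(i)²/‖r‖² for every row i. -/
theorem leverage_score_rank_one_update
    {n d : ℕ} (A : Matrix (Fin n) (Fin d) ℝ) (b : Fin n → ℝ)
    (hA : A.rank = d)
    (r : Fin n → ℝ)
    (hr : r = A.mulVec ((Aᵀ * A)⁻¹.mulVec (Aᵀ.mulVec b)) - b)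
    (hr0 : r ≠ 0)
    (M : Matrix (Fin n) (Fin (d + 1)) ℝ)
    (hM : M = Matrix.of fun i => Fin.snoc (A i) (b i)) :
    ∀ i : Fin n,
      (M * (Mᵀ * M)⁻¹ * Mᵀ) i i
        = (A * (Aᵀ * A)⁻¹ * Aᵀ) i i + (r i) ^ 2 / ∑ t, (r t) ^ 2 := by
  classical
  set S := Aᵀ * A with hSdef
  -- invertibility of S
  have hSdet : IsUnit S.det := by
    rw [isUnit_iff_ne_zero]
    intro h
    obtain ⟨v, hv0, hv⟩ := (Matrix.exists_mulVec_eq_zero_iff).mpr h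
    have h2 : v ⬝ᵥ S.mulVec v = 0 := by rw [hv, dotProduct_zero]
    rw [hSdef, ← Matrix.mulVec_mulVec, Matrix.dotProduct_mulVec,
      Matrix.vecMul_transpose, dotProduct_self_eq_zero] at h2
    exact hv0 (mulVec_inj_of_rank A hA h2)
  set x := S⁻¹.mulVec (Aᵀ.mulVec b) with hxdef
  -- normal equations
  have hAAx : Aᵀ.mulVec (A.mulVec x) = Aᵀ.mulVec b := by
    rw [hxdef, Matrix.mulVec_mulVec, Matrix.mulVec_mulVec, ← hSdef,
      Matrix.mul_nonsing_inv _ hSdet, Matrix.one_mulVec]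
  have hAr : Aᵀ.mulVec r = 0 := by
    rw [hr, Matrix.mulVec_sub, hAAx, sub_self]
  have hAr' : ∀ k, ∑ t, A t k * r t = 0 := by
    intro k
    have h := congrFun hAr k
    simpa [Matrix.mulVec, dotProduct, Matrix.transpose_apply] using h
  set c : ℝ := r ⬝ᵥ r with hcdef
  have hc0 : c ≠ 0 := fun h => hr0 (dotProduct_self_eq_zero.mp h)
  set P := A * S⁻¹ * Aᵀ with hPdef
  set N := P + c⁻¹ • Matrix.vecMulVec r r with hNdef
  set T := Mᵀ * M with hTdef
  set H := M * T⁻¹ * Mᵀ with hHdef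
  -- columns of M
  have hMc : ∀ i k, M i (Fin.castSucc k) = A i k := by
    intro i k; simp [hM]
  have hMl : ∀ i, M i (Fin.last d) = b i := by
    intro i; simp [hM]
  -- invertibility of T
  have hTdet : IsUnit T.det := by
    rw [isUnit_iff_ne_zero]
    intro h
    obtain ⟨v, hv0, hv⟩ := (Matrix.exists_mulVec_eq_zero_iff).mpr h
    have h2 : v ⬝ᵥ T.mulVec v = 0 := by rw [hv, dotProduct_zero]
    rw [hTdef, ← Matrix.mulVec_mulVec, Matrix.dotProduct_mulVec,
      Matrix.vecMul_transpose, dotProduct_self_eq_zero] at h2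
    set w : Fin d → ℝ := fun k => v (Fin.castSucc k) with hwdef
    set t : ℝ := v (Fin.last d) with htdef
    have hMv : ∀ i, (A.mulVec w) i + t * b i = 0 := by
      intro i
      have h3 := congrFun h2 i
      rw [Matrix.mulVec, dotProduct, Fin.sum_univ_castSucc] at h3
      simpa [Matrix.mulVec, dotProduct, hMc, hMl, hwdef, htdef, mul_comm] using h3
    by_cases ht : t = 0
    · have hw0 : A.mulVec w = 0 := by
        funext i; have h4 := hMv i; rw [ht] at h4; simpa using h4
      have hw1 : w = 0 := mulVec_inj_of_rank A hA hw0
      apply hv0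
      funext j
      refine Fin.lastCases ?_ ?_ j
      · exact ht
      · intro k
        have h5 := congrFun hw1 k
        simpa [hwdef] using h5
    · -- b is in the column space of A, so r = 0
      have hb : b = A.mulVec ((-t⁻¹) • w) := by
        funext i
        rw [Matrix.mulVec_smul]
        have h5 : (A.mulVec w) i = -(t * b i) := by have := hMv i; linarith
        simp only [Pi.smul_apply, smul_eq_mul, h5]
        field_simp
      have hx : x = (-t⁻¹) • w := by
        rw [hxdef, hb, Matrix.mulVec_mulVec, Matrix.mulVec_mulVec, Matrix.mul_assoc,
          ← hSdef, Matrix.nonsing_inv_mul _ hSdet, Matrix.one_mulVec]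
      apply hr0
      rw [hr, hx, ← hb, sub_self]
  -- basic facts about P and N
  have hPA : P * A = A := by
    calc P * A = A * (S⁻¹ * S) := by rw [hPdef, hSdef, Matrix.mul_assoc, Matrix.mul_assoc]
      _ = A := by rw [Matrix.nonsing_inv_mul _ hSdet, Matrix.mul_one]
  have hAx : A.mulVec x = r + b := by rw [hr]; abel
  have hPb : P.mulVec b = r + b := by
    rw [hPdef, ← Matrix.mulVec_mulVec, ← Matrix.mulVec_mulVec, ← hxdef, hAx]
  have hrAx : r ⬝ᵥ A.mulVec x = 0 := by
    rw [Matrix.dotProduct_mulVec, ← Matrix.mulVec_transpose, hAr, zero_dotProduct]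
  have hrb : r ⬝ᵥ b = -c := by
    have hb2 : b = A.mulVec x - r := by rw [hAx]; abel
    rw [hb2, dotProduct_sub, hrAx, zero_sub, hcdef]
  have hrrA : Matrix.vecMulVec r r * A = 0 := by
    ext i k
    simp only [Matrix.mul_apply, Matrix.vecMulVec_apply, Matrix.zero_apply]
    rw [show (fun t => r i * r t * A t k) = fun t => r i * (A t k * r t) from
      funext fun t => by ring]
    rw [← Finset.mul_sum, hAr' k, mul_zero]
  have hNA : N * A = A := by
    rw [hNdef, Matrix.add_mul, hPA, Matrix.smul_mul, hrrA, smul_zero, add_zero]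
  have hrrb : (Matrix.vecMulVec r r).mulVec b = (-c) • r := by
    funext i
    simp only [Matrix.mulVec, dotProduct, Matrix.vecMulVec_apply, Pi.smul_apply, smul_eq_mul]
    rw [show (fun t => r i * r t * b t) = fun t => r i * (r t * b t) from
      funext fun t => by ring]
    rw [← Finset.mul_sum]
    have h6 : ∑ t, r t * b t = -c := hrb
    rw [h6]; ring
  have hNb : N.mulVec b = b := by
    rw [hNdef, Matrix.add_mulVec, hPb, Matrix.smul_mulVec, hrrb, smul_smul]
    have hcc : c⁻¹ * -c = -1 := by field_simp
    rw [hcc, neg_one_smul]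
    abel
  -- symmetry
  have hSs : Sᵀ = S := by rw [hSdef, Matrix.transpose_mul, Matrix.transpose_transpose]
  have hPs : Pᵀ = P := by
    rw [hPdef, Matrix.transpose_mul, Matrix.transpose_mul, Matrix.transpose_transpose,
      Matrix.transpose_nonsing_inv, hSs, Matrix.mul_assoc]
  have hrrs : (Matrix.vecMulVec r r)ᵀ = Matrix.vecMulVec r r := by
    ext i j; simp [Matrix.vecMulVec_apply, mul_comm]
  have hNs : Nᵀ = N := by
    rw [hNdef, Matrix.transpose_add, hPs, Matrix.transpose_smul, hrrs]
  have hTs : Tᵀ = T := by rw [hTdef, Matrix.transpose_mul, Matrix.transpose_transpose]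
  have hHs : Hᵀ = H := by
    rw [hHdef, Matrix.transpose_mul, Matrix.transpose_mul, Matrix.transpose_transpose,
      Matrix.transpose_nonsing_inv, hTs, Matrix.mul_assoc]
  -- H fixes the column space of M
  have hHM : H * M = M := by
    calc H * M = M * (T⁻¹ * T) := by rw [hHdef, hTdef, Matrix.mul_assoc, Matrix.mul_assoc]
      _ = M := by rw [Matrix.nonsing_inv_mul _ hTdet, Matrix.mul_one]
  have hHA : H * A = A := by
    ext i k
    have h1 : (H * M) i (Fin.castSucc k) = M i (Fin.castSucc k) := by rw [hHM]
    simp only [Matrix.mul_apply] at h1 ⊢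
    rw [hMc i k] at h1
    calc ∑ t, H i t * A t k = ∑ t, H i t * M t (Fin.castSucc k) :=
          Finset.sum_congr rfl fun t _ => by rw [hMc]
      _ = A i k := h1
  have hHb : H.mulVec b = b := by
    funext i
    have h1 : (H * M) i (Fin.last d) = M i (Fin.last d) := by rw [hHM]
    simp only [Matrix.mul_apply] at h1
    rw [hMl i] at h1
    simp only [Matrix.mulVec, dotProduct]
    calc ∑ t, H i t * b t = ∑ t, H i t * M t (Fin.last d) :=
          Finset.sum_congr rfl fun t _ => by rw [hMl]
      _ = b i := h1
  have hHr : H.mulVec r = r := by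
    rw [hr, Matrix.mulVec_sub, Matrix.mulVec_mulVec, hHA, hHb]
  have hHP : H * P = P := by
    rw [hPdef, ← Matrix.mul_assoc, ← Matrix.mul_assoc, hHA]
  have hHr' : ∀ i, ∑ t, H i t * r t = r i := by
    intro i
    have h := congrFun hHr i
    simpa [Matrix.mulVec, dotProduct] using h
  have hHrr : H * Matrix.vecMulVec r r = Matrix.vecMulVec r r := by
    ext i j
    simp only [Matrix.mul_apply, Matrix.vecMulVec_apply]
    calc ∑ t, H i t * (r t * r j) = (∑ t, H i t * r t) * r j := by
          rw [Finset.sum_mul]; exact Finset.sum_congr rfl fun t _ => by ring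
      _ = r i * r j := by rw [hHr' i]
  have hHN : H * N = N := by
    rw [hNdef, Matrix.mul_add, hHP, Matrix.mul_smul, hHrr]
  have hNb' : ∀ i, ∑ t, N i t * b t = b i := by
    intro i
    have h := congrFun hNb i
    simpa [Matrix.mulVec, dotProduct] using h
  have hNM : N * M = M := by
    ext i j
    refine Fin.lastCases ?_ ?_ j
    · simp only [Matrix.mul_apply]
      rw [hMl i]
      calc ∑ t, N i t * M t (Fin.last d) = ∑ t, N i t * b t :=
            Finset.sum_congr rfl fun t _ => by rw [hMl]
        _ = b i := hNb' i
    · intro k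
      have h1 : (N * A) i k = A i k := by rw [hNA]
      simp only [Matrix.mul_apply] at h1 ⊢
      rw [hMc i k]
      calc ∑ t, N i t * M t (Fin.castSucc k) = ∑ t, N i t * A t k :=
            Finset.sum_congr rfl fun t _ => by rw [hMc]
        _ = A i k := h1
  have hNH : N * H = H := by
    rw [hHdef, ← Matrix.mul_assoc, ← Matrix.mul_assoc, hNM]
  have hHeq : H = N := by
    have h1 := congrArg Matrix.transpose hNH
    rw [Matrix.transpose_mul, hHs, hNs] at h1
    rw [← h1, hHN]
  intro i
  have hcsum : c = ∑ t, (r t) ^ 2 := by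
    simp [hcdef, dotProduct, sq]
  rw [hHeq, hNdef, Matrix.add_apply, Matrix.smul_apply, Matrix.vecMulVec_apply,
    smul_eq_mul, ← hcsum, sq, mul_comm, div_eq_mul_inv]
end
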